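/- arXiv:1206.1714 — 5 statements merged into one kernel-verified Lean document; each statement's English description precedes it below -/
import Mathlib

section
/- Let G be a group finitely generated as a monoid by a finite set A. The group word problem {v ∈ A* : v̄ = 1} is a regular language if and only if G is finite. -/
/-- An asynchronous two-tape finite state automaton: in each step it reads at
most one symbol from each tape. -/
structure AsyncFSA (A : Type*) (B : Type*) where
  Q : Type
  [fin : Finite Q]
  init : Q
  accept : Set Q
  trans : Q → Option A → Option B → Q → Prop

namespace AsyncFSA

variable {A B : Type*}

/-- Computations of an asynchronous automaton. -/
inductive Reaches (M : AsyncFSA A B) : M.Q → List A → List B → M.Q → Prop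
  | refl (q : M.Q) : Reaches M q [] [] q
  | step {p q r : M.Q} {a : Option A} {b : Option B} {u : List A} {v : List B} :
      M.trans p a b q → Reaches M q u v r →
      Reaches M p (a.toList ++ u) (b.toList ++ v) r

/-- Acceptance of a pair of strings. -/
def Accepts (M : AsyncFSA A B) (u : List A) (v : List B) : Prop :=
  ∃ q ∈ M.accept, M.Reaches M.init u v q

end AsyncFSA

/-- A relation on strings is rational if it is decided by an asynchronous
two-tape finite state automaton. -/
def IsRationalRel {A B : Type*} (R : Set (List A × List B)) : Prop :=
  ∃ M : AsyncFSA A B, ∀ p : List A × List B, p ∈ R ↔ M.Accepts p.1 p.2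

/-- Pad a pair of strings to equal length, using `none` as padding symbol. -/
def padPair {A : Type*} (p : List A × List A) : List (Option A × Option A) :=
  List.zip (p.1.map some ++ List.replicate (p.2.length - p.1.length) none)
           (p.2.map some ++ List.replicate (p.1.length - p.2.length) none)

/-- A relation on strings is regular if a synchronous two-tape finite state
automaton (a finite automaton over the padded pair alphabet) accepts a padded
pair exactly when the pair is in the relation. -/
def IsRegularRel {A : Type*} (R : Set (List A × List A)) : Prop :=
  ∃ (Q : Type) (_ : Fintype Q) (M : DFA (Option A × Option A) Q),
    ∀ p : List A × List A, p ∈ R ↔ padPair p ∈ M.accepts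

/-- A language is regular if accepted by a finite state automaton. -/
def IsRegularLang {A : Type*} (L : Set (List A)) : Prop :=
  ∃ (Q : Type) (_ : Fintype Q) (M : DFA A Q), ∀ w, w ∈ L ↔ w ∈ M.accepts

/-- Evaluation of a word in a semigroup (`none` for the empty word). -/
def evalWord {α : Type*} {S : Type*} [Semigroup S] (f : α → S) : List α → Option S
  | [] => none
  | a :: l => some (List.foldl (fun s x => s * f x) (f a) l)

/-- The semigroup word problem with respect to a set `A` of elements:
pairs of nonempty strings over `A` representing the same element. -/
def SWP {S : Type*} [Semigroup S] (A : Set S) : Set (List ↥A × List ↥A) :=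
  {p | p.1 ≠ [] ∧ p.2 ≠ [] ∧
    evalWord Subtype.val p.1 = evalWord Subtype.val p.2}

/-- The monoid word problem with respect to a set `A` of elements. -/
def MWP {M : Type*} [Monoid M] (A : Set M) : Set (List ↥A × List ↥A) :=
  {p | (p.1.map Subtype.val).prod = (p.2.map Subtype.val).prod}

/-- A semigroup has rational word problem if it has a finite generating set
with rational word problem. -/
def HasRationalWP (S : Type*) [Semigroup S] : Prop :=
  ∃ A : Set S, A.Finite ∧ Subsemigroup.closure A = ⊤ ∧ IsRationalRel (SWP A)

/-! By the Myhill–Nerode theorem a language is regular iff it has finitely many left quotients.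
The left quotient of the word problem by a word `x` is the set of words evaluating to `x̄⁻¹`;
when the evaluation map is onto `G`, distinct group elements give distinct such sets, so the
left quotients are in bijection with `G`. -/

theorem isRegularLang_iff_isRegular {α : Type*} (L : Set (List α)) :
    IsRegularLang L ↔ Language.IsRegular (L : Language α) := by
  constructor
  · rintro ⟨Q, hQ, M, hM⟩
    exact ⟨Q, hQ, M, Set.ext fun w => (hM w).symm⟩
  · rintro ⟨Q, hQ, M, rfl⟩
    exact ⟨Q, hQ, M, fun w => Iff.rfl⟩

theorem surjective_prod_map_of_closure_range_eq_top {α M : Type*} [Monoid M] {f : α → M}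
    (hf : Submonoid.closure (Set.range f) = ⊤) :
    Function.Surjective fun w : List α => (w.map f).prod := by
  intro g
  obtain ⟨w, hw⟩ := MonoidHom.mrange_eq_top.mp ((FreeMonoid.mrange_lift f).trans hf) g
  exact ⟨FreeMonoid.toList w, (FreeMonoid.lift_apply f w).symm.trans hw⟩

def wordProblem {α M : Type*} [Monoid M] (f : α → M) : Language α :=
  {w | (w.map f).prod = 1}

section WordProblem

variable {α G : Type*} [Group G]

theorem leftQuotient_wordProblem (f : α → G) (x : List α) :
    (wordProblem f).leftQuotient x =
      (fun w : List α => (w.map f).prod) ⁻¹' {((x.map f).prod)⁻¹} := by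
  ext y
  show ((x ++ y).map f).prod = 1 ↔ (y.map f).prod = ((x.map f).prod)⁻¹
  rw [List.map_append, List.prod_append, mul_eq_one_iff_inv_eq, eq_comm]

theorem isRegular_wordProblem_iff_finite (f : α → G)
    (hf : Function.Surjective fun w : List α => (w.map f).prod) :
    (wordProblem f).IsRegular ↔ Finite G := by
  let fiber : G → Language α := fun g => (fun w : List α => (w.map f).prod) ⁻¹' {g}
  have hfiber : Function.Injective fiber :=
    (Set.preimage_injective.mpr hf).comp Set.singleton_injective
  have hquot : (wordProblem f).leftQuotient =
      fiber ∘ Inv.inv ∘ fun w : List α => (w.map f).prod :=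
    funext (leftQuotient_wordProblem f)
  rw [Language.isRegular_iff_finite_range_leftQuotient, hquot,
    (inv_surjective.comp hf).range_comp, Set.finite_range_iff hfiber]

end WordProblem

theorem stmt_0_general {G : Type*} [Group G] (A : Set G)
    (hgen : Submonoid.closure A = ⊤) :
    IsRegularLang {w : List ↥A | (w.map Subtype.val).prod = 1} ↔ Finite G := by
  rw [isRegularLang_iff_isRegular]
  exact isRegular_wordProblem_iff_finite Subtype.val
    (surjective_prod_map_of_closure_range_eq_top (by rwa [Subtype.range_coe]))

/-- Anisimov-type theorem: a group finitely generated as a monoid by `A` has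
regular group word problem iff it is finite. -/
theorem stmt_0 {G : Type*} [Group G] (A : Set G) (hA : A.Finite)
    (hgen : Submonoid.closure A = ⊤) :
    IsRegularLang {w : List ↥A | (w.map Subtype.val).prod = 1} ↔ Finite G :=
  stmt_0_general A hgen
end

section
/- The word problem of the free commutative semigroup on two generators S = ⟨a,b | ab = ba⟩ with respect to A = {a,b} is not a rational relation. -/
/-!
An asynchronous automaton is an `εNFA` over the alphabet of moves `Option A × Option B`, its moves
reading nothing being the ε-moves. The pumping lemma for regular languages, applied to that
`εNFA`, gives the pumping lemma for rational relations. Pump the pair `(0ⁿ1ⁿ, 1ⁿ0ⁿ)` down: the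
removed factors lie in the prefixes `0ⁿ` and `1ⁿ`, so removing them keeps the letter counts equal
only if both are empty.
-/

namespace AsyncFSA

variable {A B : Type*} (M : AsyncFSA A B)

/-- A run is encoded as a word of moves `(a, b)`, each reading `a` from the first tape and `b`
from the second; `tape₁ w` and `tape₂ w` are the contents read on each tape. -/
def tape₁ (w : List (Option A × Option B)) : List A := w.flatMap (·.1.toList)

def tape₂ (w : List (Option A × Option B)) : List B := w.flatMap (·.2.toList)

@[simp] theorem tape₁_nil : tape₁ ([] : List (Option A × Option B)) = [] := rfl

@[simp] theorem tape₂_nil : tape₂ ([] : List (Option A × Option B)) = [] := rfl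

@[simp] theorem tape₁_cons (c : Option A × Option B) (w : List (Option A × Option B)) :
    tape₁ (c :: w) = c.1.toList ++ tape₁ w := rfl

@[simp] theorem tape₂_cons (c : Option A × Option B) (w : List (Option A × Option B)) :
    tape₂ (c :: w) = c.2.toList ++ tape₂ w := rfl

@[simp] theorem tape₁_append (w w' : List (Option A × Option B)) :
    tape₁ (w ++ w') = tape₁ w ++ tape₁ w' := List.flatMap_append

@[simp] theorem tape₂_append (w w' : List (Option A × Option B)) :
    tape₂ (w ++ w') = tape₂ w ++ tape₂ w' := List.flatMap_append

@[simp] theorem tape₁_flatten_replicate (i : ℕ) (w : List (Option A × Option B)) :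
    tape₁ (List.replicate i w).flatten = (List.replicate i (tape₁ w)).flatten := by
  induction i with
  | zero => rfl
  | succ i ih => simp [List.replicate_succ, ih]

@[simp] theorem tape₂_flatten_replicate (i : ℕ) (w : List (Option A × Option B)) :
    tape₂ (List.replicate i w).flatten = (List.replicate i (tape₂ w)).flatten := by
  induction i with
  | zero => rfl
  | succ i ih => simp [List.replicate_succ, ih]

theorem length_tape_add_le (w : List (Option A × Option B)) :
    (tape₁ w).length + (tape₂ w).length ≤ 2 * w.length := by
  induction w with
  | nil => simp
  | cons c w ih =>
    obtain ⟨a, b⟩ := c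
    cases a <;> cases b <;> simp <;> omega

theorem length_le_length_tape_add {w : List (Option A × Option B)}
    (hw : ∀ c ∈ w, c ≠ (none, none)) : w.length ≤ (tape₁ w).length + (tape₂ w).length := by
  induction w with
  | nil => simp
  | cons c w ih =>
    obtain ⟨a, b⟩ := c
    have := ih fun c hc => hw c (List.mem_cons_of_mem _ hc)
    have hab := hw (a, b) List.mem_cons_self
    cases a <;> cases b <;> simp at hab ⊢ <;> omega

/-- The moves reading nothing become ε-moves, so that every letter of an accepted word reads at
least one symbol; this is what makes the pumped factor nonempty on the tapes. -/
def toεNFA : εNFA (Option A × Option B) M.Q where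
  step q
    | none => {q' | M.trans q none none q'}
    | some (a, b) => {q' | M.trans q a b q' ∧ (a, b) ≠ (none, none)}
  start := {M.init}
  accept := M.accept

theorem reaches_iff_isPath {p r : M.Q} {u : List A} {v : List B} :
    M.Reaches p u v r ↔ ∃ x, M.toεNFA.IsPath p r x ∧
      tape₁ x.reduceOption = u ∧ tape₂ x.reduceOption = v := by
  constructor
  · intro h
    induction h with
    | refl q => exact ⟨[], .nil q, rfl, rfl⟩
    | @step p q r a b u v ht _ ih =>
      obtain ⟨x, hx, rfl, rfl⟩ := ih
      by_cases hab : (a, b) = (none, none)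
      · obtain ⟨rfl, rfl⟩ := Prod.mk.inj hab
        exact ⟨none :: x, .cons q p r none x ht hx, rfl, rfl⟩
      · exact ⟨some (a, b) :: x, .cons q p r _ x ⟨ht, hab⟩ hx, rfl, rfl⟩
  · rintro ⟨x, hx, rfl, rfl⟩
    induction hx with
    | nil q => exact .refl q
    | cons t s r c x ht _ ih =>
      rcases c with _ | ⟨a, b⟩
      · exact Reaches.step (a := none) (b := none) ht ih
      · exact Reaches.step ht.1 ih

theorem ne_none_none_of_isPath {p r : M.Q} {x : List (Option (Option A × Option B))}
    (hx : M.toεNFA.IsPath p r x) : ∀ c ∈ x.reduceOption, c ≠ (none, none) := by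
  induction hx with
  | nil => simp
  | cons t s r c x ht _ ih =>
    rcases c with _ | ⟨a, b⟩
    · simpa using ih
    · simp only [List.reduceOption_cons_of_some, List.mem_cons, forall_eq_or_imp]
      exact ⟨ht.2, ih⟩

theorem accepts_iff_exists_mem_toεNFA_accepts {u : List A} {v : List B} :
    M.Accepts u v ↔ ∃ w ∈ M.toεNFA.accepts, tape₁ w = u ∧ tape₂ w = v := by
  simp only [Accepts, εNFA.mem_accepts_iff_exists_path, reaches_iff_isPath]
  constructor
  · rintro ⟨q, hq, x, hx, rfl, rfl⟩
    exact ⟨_, ⟨M.init, q, x, rfl, hq, rfl, hx⟩, rfl, rfl⟩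
  · rintro ⟨_, ⟨_, q, x, rfl, hq, rfl, hx⟩, rfl, rfl⟩
    exact ⟨q, hq, x, hx, rfl, rfl⟩

theorem ne_none_none_of_mem_accepts {w : List (Option A × Option B)}
    (hw : w ∈ M.toεNFA.accepts) : ∀ c ∈ w, c ≠ (none, none) := by
  obtain ⟨_, _, x, -, -, rfl, hx⟩ := (εNFA.mem_accepts_iff_exists_path _).1 hw
  exact ne_none_none_of_isPath M hx

theorem pumping_lemma : ∃ n₀ : ℕ, ∀ s₁ s₂, M.Accepts s₁ s₂ → n₀ < s₁.length + s₂.length →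
    ∃ x₁ u₁ y₁ x₂ u₂ y₂, s₁ = x₁ ++ u₁ ++ y₁ ∧ s₂ = x₂ ++ u₂ ++ y₂ ∧
      1 ≤ u₁.length + u₂.length ∧ x₁.length + x₂.length + u₁.length + u₂.length ≤ n₀ ∧
      ∀ i : ℕ, M.Accepts (x₁ ++ (List.replicate i u₁).flatten ++ y₁)
        (x₂ ++ (List.replicate i u₂).flatten ++ y₂) := by
  have := M.fin
  have := Fintype.ofFinite M.Q
  refine ⟨2 * Fintype.card (Set M.Q), fun s₁ s₂ hs hlen => ?_⟩
  obtain ⟨w, hw, rfl, rfl⟩ := M.accepts_iff_exists_mem_toεNFA_accepts.1 hs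
  obtain ⟨x, u, y, rfl, hxu, hu, hpump⟩ :=
    M.toεNFA.pumping_lemma hw (by have := length_tape_add_le w; omega)
  refine ⟨tape₁ x, tape₁ u, tape₁ y, tape₂ x, tape₂ u, tape₂ y, by simp, by simp, ?_, ?_,
    fun i => ?_⟩
  · have hu' := length_le_length_tape_add (w := u) fun c hc =>
      M.ne_none_none_of_mem_accepts hw c (by simp [hc])
    have := List.length_pos_of_ne_nil hu
    omega
  · have := length_tape_add_le (x ++ u)
    simp only [tape₁_append, tape₂_append, List.length_append] at this
    omega
  · refine M.accepts_iff_exists_mem_toεNFA_accepts.2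
      ⟨x ++ (List.replicate i u).flatten ++ y, hpump ?_, by simp, by simp⟩
    refine Language.mem_mul.2 ⟨_, Language.mem_mul.2 ⟨x, rfl, _, ?_, rfl⟩, y, rfl, rfl⟩
    exact Language.mem_kstar.2
      ⟨List.replicate i u, rfl, fun _ h => (List.eq_of_mem_replicate h :)⟩

end AsyncFSA

namespace List

variable {α : Type*}

theorem eq_replicate_of_append_append_eq_replicate_append {x u y r : List α} {a : α} {n : ℕ}
    (h : x ++ u ++ y = replicate n a ++ r) (hn : x.length + u.length ≤ n) :
    u = replicate u.length a := by
  have hxu : x ++ u = replicate (x ++ u).length a := by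
    have := congrArg (take (x ++ u).length) h
    rwa [take_left', take_append_of_le_length (by simpa using hn), take_replicate,
      Nat.min_eq_left (by simpa using hn)] at this
    rfl
  exact eq_replicate_iff.2 ⟨rfl, fun b hb => eq_of_mem_replicate (hxu ▸ mem_append_right x hb)⟩

theorem count_eq_count_of_count_append_eq [BEq α] {x₁ u₁ y₁ x₂ u₂ y₂ : List α} (c : α)
    (h : (x₁ ++ u₁ ++ y₁).count c = (x₂ ++ u₂ ++ y₂).count c)
    (h₀ : (x₁ ++ y₁).count c = (x₂ ++ y₂).count c) : u₁.count c = u₂.count c := by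
  simp only [count_append] at h h₀
  omega

end List

/-- The word problem of the free commutative semigroup on two generators
(pairs of nonempty strings with equal letter counts) is not rational. -/
theorem stmt_3 :
    ¬ IsRationalRel {p : List (Fin 2) × List (Fin 2) |
        p.1 ≠ [] ∧ p.2 ≠ [] ∧ ∀ i : Fin 2, p.1.count i = p.2.count i} := by
  rintro ⟨M, hM⟩
  obtain ⟨n, hpump⟩ := M.pumping_lemma
  set U : List (Fin 2) := List.replicate (n + 1) 0 ++ List.replicate (n + 1) 1 with hU
  set V : List (Fin 2) := List.replicate (n + 1) 1 ++ List.replicate (n + 1) 0 with hV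
  have hcount : ∀ i : Fin 2, U.count i = V.count i := by
    intro i; fin_cases i <;> simp [U, V, add_comm]
  obtain ⟨x₁, u₁, y₁, x₂, u₂, y₂, h₁, h₂, hu, hn, hacc⟩ :=
    hpump U V ((hM (U, V)).1 ⟨by simp [U], by simp [V], hcount⟩) (by simp [U, V]; omega)
  have hu₁ := List.eq_replicate_of_append_append_eq_replicate_append (h₁.symm.trans hU) (by omega)
  have hu₂ := List.eq_replicate_of_append_append_eq_replicate_append (h₂.symm.trans hV) (by omega)
  obtain ⟨-, -, hcount₀⟩ := (hM (_, _)).2 (hacc 0)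
  have hcount_loop : ∀ i : Fin 2, u₁.count i = u₂.count i := fun i =>
    List.count_eq_count_of_count_append_eq i (h₁ ▸ h₂ ▸ hcount i) (by simpa using hcount₀ i)
  have hzeros := hcount_loop 0
  have hones := hcount_loop 1
  rw [hu₁, hu₂] at hzeros hones
  simp [List.count_replicate] at hzeros hones
  simp [hzeros, ← hones] at hu
end

section
/- The word problem of the bicyclic monoid B = Mon⟨b,c | bc = 1⟩ with respect to {b,c} is not a rational relation. -/
/-- The defining relation `bc = 1` of the bicyclic monoid, with `false` as `b`
and `true` as `c`. -/
def bicyclicRel : FreeMonoid Bool → FreeMonoid Bool → Prop := fun x y =>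
  x = FreeMonoid.of false * FreeMonoid.of true ∧ y = 1

namespace AsyncFSA

variable {A B : Type*} {M : AsyncFSA A B}

theorem Reaches.append {p q r : M.Q} {u₁ u₂ : List A} {v₁ v₂ : List B}
    (h₁ : M.Reaches p u₁ v₁ q) (h₂ : M.Reaches q u₂ v₂ r) :
    M.Reaches p (u₁ ++ u₂) (v₁ ++ v₂) r := by
  induction h₁ with
  | refl => exact h₂
  | step ht _ ih => simpa only [List.append_assoc] using Reaches.step ht (ih h₂)

theorem Reaches.exists_split_of_right_nil {p r : M.Q} {u₁ u₂ : List A}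
    (h : M.Reaches p (u₁ ++ u₂) [] r) :
    ∃ q, M.Reaches p u₁ [] q ∧ M.Reaches q u₂ [] r := by
  generalize hu : u₁ ++ u₂ = u at h
  generalize hv : ([] : List B) = v at h
  induction h generalizing u₁ with
  | refl q =>
    obtain ⟨rfl, rfl⟩ := List.append_eq_nil_iff.mp hu
    exact ⟨q, .refl q, .refl q⟩
  | @step p q r a b u v ht hr ih =>
    obtain ⟨rfl, rfl⟩ : b = none ∧ v = [] := by
      cases b
      · simpa using hv.symm
      · simp at hv
    cases a with
    | none =>
      obtain ⟨s, h₁, h₂⟩ := ih hu rfl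
      exact ⟨s, by simpa using Reaches.step ht h₁, h₂⟩
    | some x =>
      cases u₁ with
      | nil =>
        rw [List.nil_append] at hu
        subst hu
        exact ⟨p, .refl p, Reaches.step ht hr⟩
      | cons y u₁ =>
        simp only [Option.toList_some, List.cons_append, List.nil_append, List.cons.injEq] at hu
        obtain ⟨rfl, hu⟩ := hu
        obtain ⟨s, h₁, h₂⟩ := ih hu rfl
        exact ⟨s, Reaches.step ht h₁, h₂⟩

theorem exists_ne_accepts_append_of_right_nil [Finite M.Q] (u v : ℕ → List A)
    (h : ∀ n, M.Accepts (u n ++ v n) []) :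
    ∃ m n, m ≠ n ∧ M.Accepts (u m ++ v n) [] := by
  choose f hf hrun using h
  choose q hu hv using fun n => (hrun n).exists_split_of_right_nil
  obtain ⟨m, n, hmn, hq⟩ := Finite.exists_ne_map_eq_of_infinite q
  exact ⟨m, n, hmn, f n, hf n, by simpa using (hu m).append (hq ▸ hv n)⟩

end AsyncFSA

def bicyclicAction : FreeMonoid Bool →* Function.End ℕ :=
  FreeMonoid.lift fun x => if x then Nat.succ else Nat.pred

theorem conGen_bicyclicRel_le_ker : conGen bicyclicRel ≤ Con.ker bicyclicAction := by
  rw [Con.conGen_le]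
  rintro _ _ ⟨rfl, rfl⟩
  rw [Con.ker_rel, map_mul, map_one]
  rfl

theorem bicyclicAction_ofList_replicate (x : Bool) (n : ℕ) :
    bicyclicAction (FreeMonoid.ofList (List.replicate n x)) =
      (if x then Nat.succ else Nat.pred)^[n] := by
  rw [bicyclicAction, FreeMonoid.lift_ofList, List.map_replicate, List.prod_replicate]
  rfl

theorem conGen_bicyclicRel_replicate_append_replicate (n : ℕ) :
    conGen bicyclicRel (FreeMonoid.ofList (List.replicate n false ++ List.replicate n true)) 1 := by
  induction n with
  | zero => exact (conGen bicyclicRel).refl 1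
  | succ n ih =>
    have hbc : conGen bicyclicRel (FreeMonoid.of false * FreeMonoid.of true) 1 :=
      .of _ _ ⟨rfl, rfl⟩
    have hsplit : FreeMonoid.ofList (List.replicate (n + 1) false ++ List.replicate (n + 1) true)
        = FreeMonoid.of false *
          FreeMonoid.ofList (List.replicate n false ++ List.replicate n true) *
          FreeMonoid.of true := by
      rw [List.replicate_succ' (a := true), List.replicate_succ]
      simp only [FreeMonoid.ofList_append, FreeMonoid.ofList_cons, FreeMonoid.ofList_nil,
        mul_one, mul_assoc]
    rw [hsplit]
    refine (conGen bicyclicRel).trans ?_ hbc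
    have hcongr := (conGen bicyclicRel).mul
      ((conGen bicyclicRel).mul ((conGen bicyclicRel).refl (FreeMonoid.of false)) ih)
      ((conGen bicyclicRel).refl (FreeMonoid.of true))
    rwa [mul_one] at hcongr

theorem eq_of_conGen_bicyclicRel_replicate_append_replicate {m n : ℕ}
    (h : conGen bicyclicRel (FreeMonoid.ofList (List.replicate m false ++ List.replicate n true)) 1) :
    m = n := by
  have hm := congrFun (conGen_bicyclicRel_le_ker h) m
  rw [FreeMonoid.ofList_append, map_mul, map_one] at hm
  change bicyclicAction _ (bicyclicAction _ m) = m at hm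
  rw [bicyclicAction_ofList_replicate, bicyclicAction_ofList_replicate] at hm
  simp only [Bool.false_eq_true, ↓reduceIte, Nat.succ_iterate, Nat.pred_iterate] at hm
  omega

/-- The word problem of the bicyclic monoid `Mon⟨b,c | bc = 1⟩` is not
rational. -/
theorem stmt_4 :
    ¬ IsRationalRel {p : List Bool × List Bool |
        conGen bicyclicRel (FreeMonoid.ofList p.1) (FreeMonoid.ofList p.2)} := by
  rintro ⟨M, hM⟩
  have := M.fin
  obtain ⟨m, n, hmn, hacc⟩ := M.exists_ne_accepts_append_of_right_nil
    (fun n => List.replicate n false) (fun n => List.replicate n true)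
    fun n => (hM (_, [])).mp (conGen_bicyclicRel_replicate_append_replicate n)
  exact hmn (eq_of_conGen_bicyclicRel_replicate_append_replicate ((hM (_, [])).mpr hacc))
end

section
/- Let S be a semigroup generated by a finite set A, let b ∈ S \ A and B = A ∪ {b}, and choose w ∈ A⁺ with w̄ = b. Let Φ : B⁺ → A⁺ replace each occurrence of b by w, with graph R and reversed graph R^r. Then SWP(S,B) = R ∘ SWP(S,A) ∘ R^r; in particular, if SWP(S,A) is rational then so is SWP(S,B). -/
open Classical in
/-- Substitution on words over `insert b A` replacing the letter `b` by the
word `w` over `A` and fixing all letters of `A`. -/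
noncomputable def substGen {S : Type*} [Semigroup S] (A : Set S) (b : S)
    (w : List ↥A) : List ↥(insert b A) → List ↥A :=
  fun l => l.foldr (fun x acc =>
    if h : (x : S) ∈ A then ⟨(x : S), h⟩ :: acc else w ++ acc) []

/-- Composition of relations on strings. -/
def relComp {α β γ : Type*} (R : Set (List α × List β))
    (S : Set (List β × List γ)) : Set (List α × List γ) :=
  {p | ∃ x, (p.1, x) ∈ R ∧ (x, p.2) ∈ S}

/-! Substituting `w` for `b` is a morphism `φ : B⁺ → A⁺` that preserves the value of every
word in `S` (with `none` as the value of the empty word), so `SWP(S,B)` is the preimage of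
`SWP(S,A)` under `φ × φ`, which is exactly `R ∘ SWP(S,A) ∘ Rʳ`. Rational relations are closed
under such preimages: an automaton for `SWP(S,A)` is run on `φ u` by reading `u` one letter at
a time into a buffer of bounded length and letting the simulated moves consume the buffer. -/

section WordEvaluation

variable {S : Type*} [Semigroup S] {α β : Type*}

theorem coe_foldl_mul (f : α → S) (s : S) (l : List α) :
    ((l.foldl (fun s x => s * f x) s : S) : WithOne S) =
      s * (l.map fun a => (f a : WithOne S)).prod := by
  induction l generalizing s with
  | nil => simp
  | cons a l ih => simp [ih, mul_assoc]

theorem evalWord_eq_prod (f : α → S) (l : List α) :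
    (evalWord f l : WithOne S) = (l.map fun a => (f a : WithOne S)).prod := by
  cases l with
  | nil => rfl
  | cons a l => exact coe_foldl_mul f (f a) l

theorem evalWord_flatMap {f : α → S} {g : β → S} {φ : α → List β}
    (hφ : ∀ a, evalWord g (φ a) = some (f a)) (l : List α) :
    evalWord g (l.flatMap φ) = evalWord f l := by
  have key : ((l.flatMap φ).map fun b => (g b : WithOne S)).prod =
      (l.map fun a => (f a : WithOne S)).prod := by
    induction l with
    | nil => rfl
    | cons a l ih =>
      rw [List.flatMap_cons, List.map_append, List.prod_append, ih, ← evalWord_eq_prod, hφ]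
      rfl
  rwa [← evalWord_eq_prod, ← evalWord_eq_prod] at key

theorem mem_SWP_iff {A : Set S} {p : List ↥A × List ↥A} :
    p ∈ SWP A ↔ ∃ s, evalWord Subtype.val p.1 = some s ∧ evalWord Subtype.val p.2 = some s := by
  obtain ⟨_ | ⟨a, u⟩, _ | ⟨c, v⟩⟩ := p <;> simp [SWP, evalWord, eq_comm]

end WordEvaluation

namespace AsyncFSA

variable {α β γ : Type*}

theorem Reaches.append_s6 {M : AsyncFSA α β} {p q r : M.Q} {u u' : List α} {v v' : List β}
    (h : M.Reaches p u v q) (h' : M.Reaches q u' v' r) : M.Reaches p (u ++ u') (v ++ v') r := by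
  induction h with
  | refl => exact h'
  | step ht _ ih => simpa only [List.append_assoc] using Reaches.step ht (ih h')

def swap (M : AsyncFSA α β) : AsyncFSA β α where
  Q := M.Q
  fin := M.fin
  init := M.init
  accept := M.accept
  trans p b a q := M.trans p a b q

theorem Reaches.swap {M : AsyncFSA α β} {p q : M.Q} {u : List α} {v : List β}
    (h : M.Reaches p u v q) : M.swap.Reaches p v u q := by
  induction h with
  | refl q => exact Reaches.refl (M := M.swap) q
  | step ht _ ih => exact Reaches.step (M := M.swap) ht ih

theorem accepts_swap_iff (M : AsyncFSA α β) (u : List α) (v : List β) :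
    M.swap.Accepts v u ↔ M.Accepts u v :=
  ⟨fun ⟨q, hq, h⟩ => ⟨q, hq, h.swap⟩, fun ⟨q, hq, h⟩ => ⟨q, hq, h.swap⟩⟩

/-- The automaton reads a word `u` over `γ` on its first tape while simulating `M` on
`u.flatMap φ`: a letter `c` is read only when the buffer is empty, and then `φ c` is put
into the buffer, from which the simulated moves of `M` take their first-tape letters.
Buffers are stored through `e` because the states of an automaton live in `Type`. -/
def comapLeft (M : AsyncFSA α β) (φ : γ → List α) (N : ℕ) {k : ℕ} (e : α ≃ Fin k) :
    AsyncFSA γ β where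
  Q := M.Q × {l : List (Fin k) // l.length ≤ N}
  fin := by
    have := M.fin
    have : Finite {l : List (Fin k) // l.length ≤ N} :=
      (List.finite_length_le (Fin k) N).to_subtype
    infer_instance
  init := (M.init, ⟨[], Nat.zero_le N⟩)
  accept := {s | s.1 ∈ M.accept ∧ s.2.1 = []}
  trans s oc ob t :=
    (∃ c, oc = some c ∧ ob = none ∧ s.2.1 = [] ∧ t.2.1 = (φ c).map e ∧ t.1 = s.1) ∨
    (oc = none ∧ ∃ oa, M.trans s.1 oa ob t.1 ∧ s.2.1 = (oa.map e).toList ++ t.2.1)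

variable {M : AsyncFSA α β} {φ : γ → List α} {N k : ℕ} {e : α ≃ Fin k}

theorem reaches_of_reaches_comapLeft {s t : (M.comapLeft φ N e).Q} {u : List γ} {v : List β}
    (h : (M.comapLeft φ N e).Reaches s u v t) (ht : t.2.1 = []) :
    M.Reaches s.1 (s.2.1.map e.symm ++ u.flatMap φ) v t.1 := by
  induction h with
  | refl s => simpa [ht] using Reaches.refl s.1
  | @step s s' t oc ob u v hs _ ih =>
    rcases hs with ⟨c, rfl, rfl, hs, hs'2, hs'1⟩ | ⟨rfl, oa, hM, hs⟩
    · simpa [hs, hs'2, hs'1, List.map_map] using ih ht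
    · cases oa <;> simpa [hs] using Reaches.step hM (ih ht)

theorem reaches_comapLeft_of_flatMap_eq_nil (q : M.Q) {u : List γ} (hu : u.flatMap φ = []) :
    (M.comapLeft φ N e).Reaches (q, ⟨[], Nat.zero_le N⟩) u [] (q, ⟨[], Nat.zero_le N⟩) := by
  induction u with
  | nil => exact Reaches.refl _
  | cons c u ih =>
    rw [List.flatMap_cons, List.append_eq_nil_iff] at hu
    have hload : (M.comapLeft φ N e).trans (q, ⟨[], Nat.zero_le N⟩) (some c) none
        (q, ⟨[], Nat.zero_le N⟩) := Or.inl ⟨c, rfl, rfl, rfl, by simp [hu.1], rfl⟩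
    exact Reaches.step hload (ih hu.2)

theorem exists_reaches_comapLeft_buffer_ne_nil (hN : ∀ c, (φ c).length ≤ N) (q : M.Q)
    (buf : {l : List (Fin k) // l.length ≤ N}) {u : List γ}
    (h : buf.1.map e.symm ++ u.flatMap φ ≠ []) :
    ∃ (pre u' : List γ) (buf' : {l : List (Fin k) // l.length ≤ N}), u = pre ++ u' ∧
      (M.comapLeft φ N e).Reaches (q, buf) pre [] (q, buf') ∧ buf'.1 ≠ [] ∧
      buf'.1.map e.symm ++ u'.flatMap φ = buf.1.map e.symm ++ u.flatMap φ := by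
  induction u generalizing buf with
  | nil => exact ⟨[], [], buf, rfl, Reaches.refl _, by simpa using h, rfl⟩
  | cons c u ih =>
    obtain ⟨_ | ⟨y, r⟩, hbuf⟩ := buf
    · have hload : (M.comapLeft φ N e).trans (q, ⟨[], hbuf⟩) (some c) none
          (q, ⟨(φ c).map e, by simpa using hN c⟩) := Or.inl ⟨c, rfl, rfl, rfl, rfl, rfl⟩
      obtain ⟨pre, u', buf', rfl, hR, hne, heq⟩ := ih ⟨(φ c).map e, by simpa using hN c⟩
        (by simpa [List.map_map] using h)
      exact ⟨c :: pre, u', buf', rfl, Reaches.step hload hR, hne,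
        by simpa [List.map_map] using heq⟩
    · exact ⟨[], c :: u, ⟨y :: r, hbuf⟩, rfl, Reaches.refl _, List.cons_ne_nil _ _, rfl⟩

theorem exists_reaches_comapLeft_pop (hN : ∀ c, (φ c).length ≤ N) (q : M.Q)
    (buf : {l : List (Fin k) // l.length ≤ N}) {u : List γ} {oa : Option α} {x : List α}
    (h : buf.1.map e.symm ++ u.flatMap φ = oa.toList ++ x) :
    ∃ (pre u' : List γ) (buf₁ buf₂ : {l : List (Fin k) // l.length ≤ N}), u = pre ++ u' ∧
      (M.comapLeft φ N e).Reaches (q, buf) pre [] (q, buf₁) ∧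
      buf₁.1 = (oa.map e).toList ++ buf₂.1 ∧ buf₂.1.map e.symm ++ u'.flatMap φ = x := by
  cases oa with
  | none => exact ⟨[], u, buf, buf, rfl, Reaches.refl _, rfl, h⟩
  | some a =>
    obtain ⟨pre, u', ⟨_ | ⟨y, r⟩, hbuf⟩, rfl, hR, hne, heq⟩ :=
      exists_reaches_comapLeft_buffer_ne_nil (e := e) (u := u) hN q buf (by simp [h])
    · exact absurd rfl hne
    · rw [h] at heq
      simp only [List.map_cons, Option.toList_some, List.cons_append, List.cons.injEq] at heq
      refine ⟨pre, u', ⟨y :: r, hbuf⟩, ⟨r, (Nat.le_succ _).trans hbuf⟩, rfl, hR, ?_, heq.2⟩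
      simp [← heq.1]

theorem reaches_comapLeft_of_reaches (hN : ∀ c, (φ c).length ≤ N) {q r : M.Q} {x : List α}
    {v : List β} (h : M.Reaches q x v r) (buf : {l : List (Fin k) // l.length ≤ N})
    (u : List γ) (hx : buf.1.map e.symm ++ u.flatMap φ = x) :
    (M.comapLeft φ N e).Reaches (q, buf) u v (r, ⟨[], Nat.zero_le N⟩) := by
  induction h generalizing buf u with
  | refl q =>
    obtain ⟨hbuf, hu⟩ := List.append_eq_nil_iff.1 hx
    obtain ⟨_, _⟩ := buf
    simp only [List.map_eq_nil_iff] at hbuf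
    subst hbuf
    exact reaches_comapLeft_of_flatMap_eq_nil q hu
  | @step q q' r oa ob x v hM _ ih =>
    obtain ⟨pre, u', buf₁, buf₂, rfl, hR, h₁, h₂⟩ := exists_reaches_comapLeft_pop hN q buf hx
    have hmove : (M.comapLeft φ N e).trans (q, buf₁) none ob (q', buf₂) :=
      Or.inr ⟨rfl, oa, hM, h₁⟩
    simpa using hR.append_s6 (Reaches.step hmove (ih buf₂ u' h₂))

theorem accepts_comapLeft_iff (hN : ∀ c, (φ c).length ≤ N) (u : List γ) (v : List β) :
    (M.comapLeft φ N e).Accepts u v ↔ M.Accepts (u.flatMap φ) v := by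
  constructor
  · rintro ⟨t, ⟨ht, hbuf⟩, h⟩
    exact ⟨t.1, ht, by simpa [comapLeft] using reaches_of_reaches_comapLeft h hbuf⟩
  · rintro ⟨r, hr, h⟩
    exact ⟨(r, ⟨[], Nat.zero_le N⟩), ⟨hr, rfl⟩,
      reaches_comapLeft_of_reaches hN h ⟨[], Nat.zero_le N⟩ u (List.nil_append _)⟩

end AsyncFSA

namespace IsRationalRel

variable {α β γ δ : Type*} {R : Set (List α × List β)}

theorem preimage_swap (hR : IsRationalRel R) : IsRationalRel (Prod.swap ⁻¹' R) := by
  obtain ⟨M, hM⟩ := hR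
  exact ⟨M.swap, fun p => (hM p.swap).trans (M.accepts_swap_iff _ _).symm⟩

theorem preimage_flatMap_left [Finite α] (hR : IsRationalRel R) (φ : γ → List α) {N : ℕ}
    (hN : ∀ c, (φ c).length ≤ N) : IsRationalRel (Prod.map (List.flatMap φ) id ⁻¹' R) := by
  obtain ⟨M, hM⟩ := hR
  exact ⟨M.comapLeft φ N (Finite.equivFin α),
    fun p => (hM _).trans (AsyncFSA.accepts_comapLeft_iff hN p.1 p.2).symm⟩

theorem preimage_flatMap [Finite α] [Finite β] (hR : IsRationalRel R) (φ : γ → List α)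
    (ψ : δ → List β) {N : ℕ} (hφ : ∀ c, (φ c).length ≤ N) (hψ : ∀ d, (ψ d).length ≤ N) :
    IsRationalRel (Prod.map (List.flatMap φ) (List.flatMap ψ) ⁻¹' R) :=
  ((((hR.preimage_flatMap_left φ hφ).preimage_swap).preimage_flatMap_left ψ hψ).preimage_swap)

end IsRationalRel

theorem relComp_graph_relComp_graph {α β γ δ : Type*} (f : List α → List γ)
    (g : List β → List δ) (R : Set (List γ × List δ)) :
    relComp (relComp {p : List α × List γ | p.2 = f p.1} R)
      {p : List δ × List β | p.1 = g p.2} = Prod.map f g ⁻¹' R := by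
  ext ⟨u, v⟩
  simp [relComp]

section Substitution

variable {S : Type*} {A : Set S} {b : S} {w : List ↥A}

open Classical in
noncomputable def expandLetter (A : Set S) (b : S) (w : List ↥A) (x : ↥(insert b A)) :
    List ↥A :=
  if h : (x : S) ∈ A then [⟨x, h⟩] else w

theorem length_expandLetter_le (x : ↥(insert b A)) :
    (expandLetter A b w x).length ≤ w.length + 1 := by
  unfold expandLetter
  split <;> simp

variable [Semigroup S]

theorem substGen_eq_flatMap : substGen A b w = List.flatMap (expandLetter A b w) := by
  funext l
  induction l with
  | nil => rfl
  | cons x l ih =>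
    rw [List.flatMap_cons, ← ih]
    by_cases hx : (x : S) ∈ A <;> simp [substGen, expandLetter, hx]

theorem evalWord_expandLetter (hwb : evalWord Subtype.val w = some b) (x : ↥(insert b A)) :
    evalWord Subtype.val (expandLetter A b w x) = some (x : S) := by
  unfold expandLetter
  split
  · rfl
  · rename_i hx
    rw [hwb, (Set.mem_insert_iff.1 x.2).resolve_right hx]

theorem SWP_insert_eq_preimage_substGen (hwb : evalWord Subtype.val w = some b) :
    SWP (insert b A) = Prod.map (substGen A b w) (substGen A b w) ⁻¹' SWP A := by
  ext ⟨u, v⟩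
  simp only [Set.mem_preimage, Prod.map, mem_SWP_iff, substGen_eq_flatMap,
    evalWord_flatMap (evalWord_expandLetter hwb)]

end Substitution

theorem stmt_6_general {S : Type*} [Semigroup S] (A : Set S) (hA : A.Finite) (b : S)
    (w : List ↥A) (hwb : evalWord Subtype.val w = some b) :
    SWP (insert b A) =
      relComp (relComp
        {p : List ↥(insert b A) × List ↥A | p.2 = substGen A b w p.1}
        (SWP A))
        {p : List ↥A × List ↥(insert b A) | p.1 = substGen A b w p.2} ∧
    (IsRationalRel (SWP A) → IsRationalRel (SWP (insert b A))) := by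
  have hSWP := SWP_insert_eq_preimage_substGen hwb
  refine ⟨by rw [relComp_graph_relComp_graph, hSWP], fun hrat => ?_⟩
  have := hA.to_subtype
  rw [hSWP, substGen_eq_flatMap]
  exact hrat.preimage_flatMap _ _ length_expandLetter_le length_expandLetter_le

/-- `SWP(S,B) = R ∘ SWP(S,A) ∘ Rʳ` for `B = A ∪ {b}`, and hence rationality of
`SWP(S,A)` implies rationality of `SWP(S,B)`. -/
theorem stmt_6 {S : Type*} [Semigroup S] (A : Set S) (hA : A.Finite)
    (hgen : Subsemigroup.closure A = ⊤) (b : S) (hb : b ∉ A)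
    (w : List ↥A) (hw : w ≠ []) (hwb : evalWord Subtype.val w = some b) :
    SWP (insert b A) =
      relComp (relComp
        {p : List ↥(insert b A) × List ↥A | p.2 = substGen A b w p.1}
        (SWP A))
        {p : List ↥A × List ↥(insert b A) | p.1 = substGen A b w p.2} ∧
    (IsRationalRel (SWP A) → IsRationalRel (SWP (insert b A))) :=
  stmt_6_general A hA b w hwb
end

section
/- Let S be a semigroup with a finite generating set A such that SWP(S,A) is rational, and let c ∈ A. Then the subsemigroup S' generated by C = A \ {c} has rational word problem SWP(S',C). -/
/-! Rational relations are closed under inverse images of letter-to-letter renamings: an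
automaton for `R` reads a renamed letter wherever it would read the original one. The word
problem over `A \ {c}` is the inverse image of the word problem over `A` under the inclusion
of alphabets, so restricting the automaton for `SWP A` to transitions that avoid `c` recognises
`SWP (A \ {c})`. -/

lemma Option.exists_eq_map_of_toList_eq_map {α β : Type*} {f : α → β} {a : Option β}
    {l : List α} (h : a.toList = l.map f) : ∃ a' : Option α, a = a'.map f ∧ l = a'.toList := by
  rcases a with _ | b
  · exact ⟨none, rfl, by simpa using h.symm⟩
  · obtain ⟨a', l', rfl, rfl, hl'⟩ := List.map_eq_cons_iff.mp h.symm
    exact ⟨some a', rfl, by simpa using hl'⟩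

namespace AsyncFSA

variable {A B A' B' : Type*}

def comap (M : AsyncFSA A B) (f : A' → A) (g : B' → B) : AsyncFSA A' B' where
  Q := M.Q
  fin := M.fin
  init := M.init
  accept := M.accept
  trans p a b q := M.trans p (a.map f) (b.map g) q

variable (M : AsyncFSA A B) (f : A' → A) (g : B' → B)

lemma Reaches.of_comap {p q : (M.comap f g).Q} {u : List A'} {v : List B'}
    (h : (M.comap f g).Reaches p u v q) : M.Reaches p (u.map f) (v.map g) q := by
  induction h with
  | refl q => exact .refl (M := M) q
  | @step _ _ _ a b _ _ ht _ ih =>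
    rw [List.map_append, List.map_append, ← Option.toList_map, ← Option.toList_map]
    exact .step ht ih

lemma Reaches.comap {p q : M.Q} {u : List A'} {v : List B'}
    (h : M.Reaches p (u.map f) (v.map g) q) : (M.comap f g).Reaches p u v q := by
  generalize hu : u.map f = x, hv : v.map g = y at h
  induction h generalizing u v with
  | refl q =>
    obtain rfl : u = [] := List.map_eq_nil_iff.mp hu
    obtain rfl : v = [] := List.map_eq_nil_iff.mp hv
    exact .refl (M := M.comap f g) q
  | step ht _ ih =>
    obtain ⟨u₁, u₂, rfl, hu₁, hu₂⟩ := List.map_eq_append_iff.mp hu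
    obtain ⟨v₁, v₂, rfl, hv₁, hv₂⟩ := List.map_eq_append_iff.mp hv
    obtain ⟨a, rfl, rfl⟩ := Option.exists_eq_map_of_toList_eq_map hu₁.symm
    obtain ⟨b, rfl, rfl⟩ := Option.exists_eq_map_of_toList_eq_map hv₁.symm
    exact .step ht (ih hu₂ hv₂)

lemma accepts_comap_iff {u : List A'} {v : List B'} :
    (M.comap f g).Accepts u v ↔ M.Accepts (u.map f) (v.map g) :=
  exists_congr fun _ ↦ and_congr_right fun _ ↦
    ⟨Reaches.of_comap M f g, Reaches.comap M f g⟩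

end AsyncFSA

lemma IsRationalRel.preimage_map {A B A' B' : Type*} {R : Set (List A × List B)}
    (hR : IsRationalRel R) (f : A' → A) (g : B' → B) :
    IsRationalRel (Prod.map (List.map f) (List.map g) ⁻¹' R) := by
  obtain ⟨M, hM⟩ := hR
  exact ⟨M.comap f g, fun p ↦ (hM _).trans (M.accepts_comap_iff f g).symm⟩

lemma evalWord_map {α β S : Type*} [Semigroup S] (f : β → S) (g : α → β) (l : List α) :
    evalWord f (l.map g) = evalWord (f ∘ g) l := by
  cases l with
  | nil => rfl
  | cons a l => simp only [evalWord, List.map_cons, List.foldl_map, Function.comp_apply]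

lemma SWP_eq_preimage_inclusion {S : Type*} [Semigroup S] {B A : Set S} (h : B ⊆ A) :
    SWP B = Prod.map (List.map (Set.inclusion h)) (List.map (Set.inclusion h)) ⁻¹' SWP A := by
  ext p
  simp only [SWP, Set.mem_preimage, Set.mem_ofPred_eq, Prod.map_fst, Prod.map_snd, ne_eq,
    List.map_eq_nil_iff, evalWord_map]
  rfl

theorem stmt_7_general {S : Type*} [Semigroup S] (A : Set S) (hrat : IsRationalRel (SWP A))
    (c : S) :
    IsRationalRel (SWP (A \ {c})) := by
  rw [SWP_eq_preimage_inclusion Set.sdiff_subset]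
  exact hrat.preimage_map _ _

/-- Removing a generator preserves rational word problem: the subsemigroup
generated by `A \ {c}` has rational word problem. -/
theorem stmt_7 {S : Type*} [Semigroup S] (A : Set S) (hA : A.Finite)
    (hgen : Subsemigroup.closure A = ⊤) (hrat : IsRationalRel (SWP A))
    (c : S) (hc : c ∈ A) :
    IsRationalRel (SWP (A \ {c})) :=
  stmt_7_general A hrat c
end
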